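/- arXiv:1607.06948 — 3 statements merged into one kernel-verified Lean document; each statement's English description precedes it below -/
import Mathlib

section
/- Let α ∈ (0,1) and let f be a Schwartz function on ℝ. Then the Fourier transform of t ↦ τ^{-α} Σ_{j=0}^∞ b_j f(t - jτ) equals ξ ↦ τ^{-α}(1 - e^{-iτξ})^α 𝓕f(ξ), where b_j are the coefficients of (1-ξ)^α. -/
open Complex MeasureTheory Filter Finset Topology

/-! Auxiliary machinery for `stmt2`. -/

private lemma iter_cpow (α : ℝ) (n : ℕ) :
    ∀ z : ℂ, (1 - z) ∈ Complex.slitPlane →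
      iteratedDeriv n (fun w : ℂ => (1 - w) ^ (α : ℂ)) z
        = (-1 : ℂ) ^ n * (∏ k ∈ Finset.range n, ((α : ℂ) - k)) * (1 - z) ^ ((α : ℂ) - n) := by
  induction n with
  | zero => intro z hz; simp [iteratedDeriv_zero]
  | succ n ih =>
    intro z hz
    have hU : IsOpen {w : ℂ | (1 - w) ∈ Complex.slitPlane} :=
      Complex.isOpen_slitPlane.preimage (continuous_const.sub continuous_id)
    have hev : iteratedDeriv n (fun w : ℂ => (1 - w) ^ (α : ℂ))
        =ᶠ[nhds z] fun w =>
          (-1 : ℂ) ^ n * (∏ k ∈ Finset.range n, ((α : ℂ) - k)) * (1 - w) ^ ((α : ℂ) - n) := by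
      filter_upwards [hU.mem_nhds hz] with w hw using ih w hw
    rw [iteratedDeriv_succ, hev.deriv_eq]
    have hd : HasDerivAt (fun w : ℂ => (1 - w) ^ ((α : ℂ) - n))
        (((α : ℂ) - n) * (1 - z) ^ ((α : ℂ) - n - 1) * (-1)) z :=
      ((hasDerivAt_id z).const_sub 1).cpow_const hz
    rw [(hd.const_mul ((-1 : ℂ) ^ n * (∏ k ∈ Finset.range n, ((α : ℂ) - k)))).deriv]
    have hexp : (α : ℂ) - n - 1 = (α : ℂ) - (n + 1 : ℕ) := by push_cast; ring
    rw [hexp, Finset.prod_range_succ]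
    push_cast
    ring


private lemma coeff_eq (α : ℝ) (b : ℕ → ℂ)
    (hb : ∀ ξ : ℂ, ‖ξ‖ < 1 → HasSum (fun j : ℕ => b j * ξ ^ j) ((1 - ξ) ^ (α : ℂ))) (n : ℕ) :
    b n = (-1 : ℂ) ^ n * (∏ k ∈ Finset.range n, ((α : ℂ) - k)) / (n.factorial : ℂ) := by
  set g : ℂ → ℂ := fun w => (1 - w) ^ (α : ℂ) with hg
  set p := FormalMultilinearSeries.ofScalars ℂ b with hp
  have hrad : 1 ≤ p.radius := by
    apply ENNReal.le_of_forall_nnreal_lt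
    intro r hr
    have hr1 : (r : ℝ) < 1 := by exact_mod_cast hr
    have hnr : ‖((r : ℝ) : ℂ)‖ < 1 := by
      simpa [_root_.abs_of_nonneg r.coe_nonneg] using hr1
    have hsum := (hb ((r : ℝ) : ℂ) hnr).summable
    have htend : Tendsto (fun n : ℕ => ‖b n * ((r : ℝ) : ℂ) ^ n‖) atTop (𝓝 0) := by
      simpa using hsum.tendsto_atTop_zero.norm
    obtain ⟨C, hC⟩ := htend.bddAbove_range
    apply p.le_radius_of_bound C
    intro m
    have : ‖p m‖ * (r : ℝ) ^ m = ‖b m * ((r : ℝ) : ℂ) ^ m‖ := by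
      rw [hp, FormalMultilinearSeries.ofScalars_norm]
      simp [norm_mul, _root_.abs_of_nonneg r.coe_nonneg]
    rw [this]
    exact hC ⟨m, rfl⟩
  have hball : HasFPowerSeriesOnBall g p 0 1 := by
    refine ⟨hrad, one_pos, ?_⟩
    intro y hy
    rw [mem_emetric_ball_zero_iff] at hy
    have hy1 : ‖y‖ < 1 := by rw [enorm_eq_nnnorm] at hy; exact_mod_cast hy
    have := hb y hy1
    simp only [zero_add, hp, FormalMultilinearSeries.ofScalars_apply_eq, smul_eq_mul]
    exact this
  have key := hball.factorial_smul (1 : ℂ) n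
  have hlhs : (n.factorial : ℕ) • p n (fun _ => (1 : ℂ)) = (n.factorial : ℂ) * b n := by
    rw [hp, FormalMultilinearSeries.ofScalars_apply_eq]
    simp [nsmul_eq_mul]
  have hrhs : iteratedFDeriv ℂ n g 0 (fun _ => (1 : ℂ))
      = (-1 : ℂ) ^ n * (∏ k ∈ Finset.range n, ((α : ℂ) - k)) := by
    have h0 : (1 - (0 : ℂ)) ∈ Complex.slitPlane := by
      simp [Complex.mem_slitPlane_iff]
    have := iter_cpow α n 0 h0
    rw [iteratedDeriv] at this
    rw [show g = fun w : ℂ => (1 - w) ^ (α : ℂ) from rfl, this]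
    simp [Complex.one_cpow]
  rw [hlhs, hrhs] at key
  have hfac : (n.factorial : ℂ) ≠ 0 := by exact_mod_cast n.factorial_ne_zero
  field_simp [hfac] at key ⊢
  linear_combination key

private noncomputable def Bco (α : ℝ) (n : ℕ) : ℝ :=
  ((-1 : ℝ) ^ n * ∏ k ∈ Finset.range n, (α - k)) / n.factorial

private noncomputable def Cco (α : ℝ) (n : ℕ) : ℝ :=
  ((-1 : ℝ) ^ n * ∏ k ∈ Finset.range n, (α - 1 - k)) / n.factorial

private lemma Bco_zero (α : ℝ) : Bco α 0 = 1 := by simp [Bco]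

private lemma Cco_zero (α : ℝ) : Cco α 0 = 1 := by simp [Cco]

private lemma Cco_rec (α : ℝ) (n : ℕ) :
    Cco α (n + 1) = Cco α n * ((n + 1 - α) / (n + 1)) := by
  have h1 : ((n.factorial : ℝ)) ≠ 0 := by exact_mod_cast n.factorial_ne_zero
  have h2 : ((n : ℝ) + 1) ≠ 0 := by positivity
  simp only [Cco, Finset.prod_range_succ, Nat.factorial_succ]
  push_cast
  field_simp
  ring

private lemma Bco_rec (α : ℝ) (n : ℕ) :
    Bco α (n + 1) = -α * Cco α n / (n + 1) := by
  have h1 : ((n.factorial : ℝ)) ≠ 0 := by exact_mod_cast n.factorial_ne_zero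
  have h2 : ((n : ℝ) + 1) ≠ 0 := by positivity
  have hprod : (∏ k ∈ Finset.range (n + 1), (α - k))
      = (∏ k ∈ Finset.range n, (α - 1 - k)) * α := by
    rw [Finset.prod_range_succ']
    congr 1
    · exact Finset.prod_congr rfl fun k _ => by push_cast; ring
    · simp
  simp only [Bco, Cco, hprod, Nat.factorial_succ]
  push_cast
  field_simp
  ring

private lemma Cco_nonneg (α : ℝ) (hα1 : α < 1) : ∀ n, 0 ≤ Cco α n := by
  intro n
  induction n with
  | zero => simp [Cco_zero]
  | succ n ih =>
    rw [Cco_rec]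
    have hn : (0 : ℝ) ≤ (n : ℝ) + 1 - α := by
      have : (0 : ℝ) ≤ (n : ℝ) := n.cast_nonneg
      linarith
    exact mul_nonneg ih (div_nonneg hn (by positivity))

private lemma Bco_nonpos (α : ℝ) (hα0 : 0 < α) (hα1 : α < 1) (n : ℕ) :
    Bco α (n + 1) ≤ 0 := by
  rw [Bco_rec]
  apply div_nonpos_of_nonpos_of_nonneg
  · have := Cco_nonneg α hα1 n
    nlinarith
  · positivity

private lemma sum_Bco (α : ℝ) (N : ℕ) :
    ∑ n ∈ Finset.range (N + 1), Bco α n = Cco α N := by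
  induction N with
  | zero => simp [Bco_zero, Cco_zero]
  | succ N ih =>
    rw [Finset.sum_range_succ, ih, Bco_rec, Cco_rec]
    have h2 : ((N : ℝ) + 1) ≠ 0 := by positivity
    field_simp
    ring

private lemma sum_abs_Bco_le (α : ℝ) (hα0 : 0 < α) (hα1 : α < 1) (N : ℕ) :
    ∑ n ∈ Finset.range N, |Bco α n| ≤ 2 := by
  cases N with
  | zero => simp
  | succ M =>
    rw [Finset.sum_range_succ']
    have habs : ∀ n ∈ Finset.range M, |Bco α (n + 1)| = -Bco α (n + 1) := fun n _ =>
      abs_of_nonpos (Bco_nonpos α hα0 hα1 n)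
    rw [Finset.sum_congr rfl habs, Finset.sum_neg_distrib]
    have hsum : ∑ n ∈ Finset.range M, Bco α (n + 1) = Cco α M - 1 := by
      have h1 := sum_Bco α M
      rw [Finset.sum_range_succ'] at h1
      rw [Bco_zero] at h1
      linarith
    rw [hsum, Bco_zero]
    have := Cco_nonneg α hα1 M
    rw [_root_.abs_of_nonneg (zero_le_one)]
    linarith

private lemma boundary_hasSum (α : ℝ) (hα0 : 0 < α) (b : ℕ → ℂ)
    (hb : ∀ ξ : ℂ, ‖ξ‖ < 1 → HasSum (fun j : ℕ => b j * ξ ^ j) ((1 - ξ) ^ (α : ℂ)))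
    (hs : Summable fun n => ‖b n‖) {z : ℂ} (hz : ‖z‖ ≤ 1) :
    HasSum (fun j : ℕ => b j * z ^ j) ((1 - z) ^ (α : ℂ)) := by
  rcases lt_or_eq_of_le hz with hlt | heq
  · exact hb z hlt
  have hsum : Summable fun j : ℕ => b j * z ^ j := by
    apply hs.of_norm_bounded
    intro j
    rw [norm_mul, norm_pow, heq, one_pow, mul_one]
  suffices h : ∑' j : ℕ, b j * z ^ j = (1 - z) ^ (α : ℂ) by
    rw [← h]; exact hsum.hasSum
  -- radial limit argument
  have h01 : (0 : ℝ) < 1 := one_pos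
  have hIoo : Set.Ioo (0 : ℝ) 1 ∈ 𝓝[<] (1 : ℝ) := Ioo_mem_nhdsLT h01
  have h1 : Tendsto (fun r : ℝ => ∑' j : ℕ, b j * (((r : ℂ)) * z) ^ j) (𝓝[<] (1 : ℝ))
      (𝓝 (∑' j : ℕ, b j * z ^ j)) := by
    apply tendsto_tsum_of_dominated_convergence hs
    · intro k
      have hc : Continuous fun r : ℝ => b k * (((r : ℂ)) * z) ^ k := by
        continuity
      have ht := (hc.tendsto 1).mono_left (nhdsWithin_le_nhds (s := Set.Iio (1 : ℝ)))
      simpa using ht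
    · filter_upwards [hIoo] with r hr k
      rw [norm_mul, norm_pow, norm_mul]
      have : ‖((r : ℂ))‖ * ‖z‖ ≤ 1 := by
        rw [← heq]
        have : ‖((r : ℂ))‖ = r := by
          simp [_root_.abs_of_nonneg hr.1.le]
        rw [this]
        nlinarith [hr.1, hr.2, norm_nonneg z]
      calc ‖b k‖ * (‖((r : ℂ))‖ * ‖z‖) ^ k ≤ ‖b k‖ * 1 ^ k := by
            gcongr

        _ = ‖b k‖ := by simp
  have heqf : (fun r : ℝ => ∑' j : ℕ, b j * (((r : ℂ)) * z) ^ j)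
      =ᶠ[𝓝[<] (1 : ℝ)] fun r : ℝ => (1 - ((r : ℂ)) * z) ^ (α : ℂ) := by
    filter_upwards [hIoo] with r hr
    have hnorm : ‖((r : ℂ)) * z‖ < 1 := by
      rw [norm_mul, ← heq]
      have : ‖((r : ℂ))‖ = r := by simp [_root_.abs_of_nonneg hr.1.le]
      rw [this, heq, mul_one]
      exact hr.2
    exact (hb _ hnorm).tsum_eq
  have h2 : Tendsto (fun r : ℝ => (1 - ((r : ℂ)) * z) ^ (α : ℂ)) (𝓝[<] (1 : ℝ))
      (𝓝 ((1 - z) ^ (α : ℂ))) := by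
    by_cases hz1 : z = 1
    · subst hz1
      have hval : ((1 : ℂ) - 1) ^ (α : ℂ) = 0 := by
        rw [sub_self, Complex.zero_cpow]
        exact_mod_cast (ne_of_gt hα0)
      rw [hval]
      rw [tendsto_zero_iff_norm_tendsto_zero]
      have hcong : (fun r : ℝ => ‖(1 - ((r : ℂ)) * 1) ^ (α : ℂ)‖)
          =ᶠ[𝓝[<] (1 : ℝ)] fun r : ℝ => (1 - r) ^ α := by
        filter_upwards [hIoo] with r hr
        have h1r : (0 : ℝ) ≤ 1 - r := by linarith [hr.2]
        have : (1 - ((r : ℂ)) * 1) = (((1 - r : ℝ)) : ℂ) := by push_cast; ring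
        rw [this, ← Complex.ofReal_cpow h1r]
        simp [Complex.norm_real, _root_.abs_of_nonneg (Real.rpow_nonneg h1r α)]
      have htend : Tendsto (fun r : ℝ => (1 : ℝ) - r) (𝓝[<] (1 : ℝ)) (𝓝 0) := by
        have hc : Continuous fun r : ℝ => (1 : ℝ) - r := by continuity
        have := (hc.tendsto (1 : ℝ)).mono_left (nhdsWithin_le_nhds (s := Set.Iio (1 : ℝ)))
        simpa using this
      have hrpow : ContinuousAt (fun x : ℝ => x ^ α) 0 :=
        Real.continuousAt_rpow_const 0 α (Or.inr hα0.le)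
      have hfin := hrpow.tendsto.comp htend
      rw [Real.zero_rpow (ne_of_gt hα0)] at hfin
      exact (tendsto_congr' hcong).mpr (by exact hfin)
    · have hslit : (1 - z) ∈ Complex.slitPlane := by
        rw [Complex.mem_slitPlane_iff]
        by_cases him : z.im = 0
        · left
          have hre : z.re < 1 := by
            rcases lt_or_eq_of_le (le_trans (Complex.abs_re_le_norm z) hz) with h | h
            · exact lt_of_le_of_lt (le_abs_self _) h
            · rcases (abs_eq (by norm_num : (0:ℝ) ≤ 1)).mp h with h' | h'
              · exact absurd (Complex.ext h' him) hz1
              · linarith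
          simp [Complex.sub_re]
          linarith
        · right
          simp [Complex.sub_im, him]
      have hcont : ContinuousAt (fun w : ℂ => w ^ (α : ℂ)) (1 - z) :=
        continuousAt_cpow_const hslit
      have hlin : Tendsto (fun r : ℝ => 1 - ((r : ℂ)) * z) (𝓝[<] (1 : ℝ)) (𝓝 (1 - z)) := by
        have hc : Continuous fun r : ℝ => 1 - ((r : ℂ)) * z := by continuity
        have := (hc.tendsto 1).mono_left (nhdsWithin_le_nhds (s := Set.Iio (1 : ℝ)))
        simpa using this
      exact hcont.tendsto.comp hlin
  exact tendsto_nhds_unique (h1.congr' heqf) h2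


/-- For `α ∈ (0,1)`, a Schwartz function `f` on `ℝ`, and step size `τ > 0`, the
Fourier transform of `t ↦ τ^{-α} Σ_{j=0}^∞ b_j f(t - jτ)` equals
`ξ ↦ τ^{-α}(1 - e^{-iτξ})^α 𝓕f(ξ)`, where the `b_j` are the coefficients of
`(1-ξ)^α` and `𝓕f(ξ) = ∫ f(t) e^{-itξ} dt`. -/
theorem stmt2 (α : ℝ) (hα : α ∈ Set.Ioo (0:ℝ) 1) (τ : ℝ) (hτ : 0 < τ)
    (f : SchwartzMap ℝ ℂ) (b : ℕ → ℂ)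
    (hb : ∀ ξ : ℂ, ‖ξ‖ < 1 → HasSum (fun j : ℕ => b j * ξ^j) ((1 - ξ) ^ (α : ℂ)))
    (ξ : ℝ) :
    ∫ t : ℝ, ((τ ^ (-α) : ℝ) : ℂ) * (∑' j : ℕ, b j * f (t - j * τ)) *
        Complex.exp (-Complex.I * t * ξ)
      = ((τ ^ (-α) : ℝ) : ℂ) * (1 - Complex.exp (-Complex.I * τ * ξ)) ^ (α : ℂ) *
          ∫ t : ℝ, f t * Complex.exp (-Complex.I * t * ξ) := by
  obtain ⟨hα0, hα1⟩ := hα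
  have hbB : ∀ n, b n = ((Bco α n : ℝ) : ℂ) := by
    intro n
    rw [coeff_eq α b hb n, Bco]
    push_cast
    ring
  have hsummable : Summable fun n => ‖b n‖ := by
    apply summable_of_sum_range_le (c := 2) (fun n => norm_nonneg _)
    intro N
    have habs : ∀ n ∈ Finset.range N, ‖b n‖ = |Bco α n| := fun n _ => by
      rw [hbB n, Complex.norm_real, Real.norm_eq_abs]
    rw [Finset.sum_congr rfl habs]
    exact sum_abs_Bco_le α hα0 hα1 N
  -- norm of the exponential
  have hnorme : ∀ s : ℝ, ‖Complex.exp (-Complex.I * (s : ℂ) * (ξ : ℂ))‖ = 1 := by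
    intro s
    rw [Complex.norm_exp]
    have : (-Complex.I * (s : ℂ) * (ξ : ℂ)).re = 0 := by simp
    rw [this, Real.exp_zero]
  set z : ℂ := Complex.exp (-Complex.I * (τ : ℂ) * (ξ : ℂ)) with hz
  have hznorm : ‖z‖ ≤ 1 := le_of_eq (hnorme τ)
  -- each summand
  set F : ℕ → ℝ → ℂ := fun j t => b j * f (t - (j : ℝ) * τ) * Complex.exp (-Complex.I * t * ξ)
    with hF
  have hFint : ∀ j : ℕ, Integrable (F j) := by
    intro j
    have h1 : Integrable (fun t : ℝ => f (t - (j : ℝ) * τ)) :=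
      (f.integrable (μ := volume)).comp_sub_right ((j : ℝ) * τ)
    have hmeas : AEStronglyMeasurable (fun t : ℝ => Complex.exp (-Complex.I * t * ξ)) volume := by
      apply Continuous.aestronglyMeasurable
      continuity
    have h2 := (h1.const_mul (b j)).bdd_mul (c := 1) hmeas (Filter.Eventually.of_forall fun t => le_of_eq (hnorme t))
    apply h2.congr
    filter_upwards with t
    rw [hF]
    ring
  have hFnorm : ∀ j : ℕ, (∫ t : ℝ, ‖F j t‖) = ‖b j‖ * ∫ t : ℝ, ‖f t‖ := by
    intro j
    have : ∀ t : ℝ, ‖F j t‖ = ‖b j‖ * ‖f (t - (j : ℝ) * τ)‖ := by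
      intro t
      rw [hF]
      simp only [norm_mul, hnorme t, mul_one]
    rw [MeasureTheory.integral_congr_ae (Filter.Eventually.of_forall this),
      MeasureTheory.integral_const_mul]
    congr 1
    exact integral_sub_right_eq_self (fun t => ‖f t‖) ((j : ℝ) * τ)
  have hFsum : Summable fun j => ∫ t : ℝ, ‖F j t‖ := by
    simp_rw [hFnorm]
    exact hsummable.mul_right _
  -- value of each integral
  have hFval : ∀ j : ℕ, (∫ t : ℝ, F j t)
      = b j * z ^ j * ∫ t : ℝ, f t * Complex.exp (-Complex.I * t * ξ) := by
    intro j
    have hshift := MeasureTheory.integral_add_right_eq_self (μ := volume) (F j) ((j : ℝ) * τ)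
    rw [← hshift]
    have : ∀ t : ℝ, F j (t + (j : ℝ) * τ)
        = (b j * z ^ j) * (f t * Complex.exp (-Complex.I * t * ξ)) := by
      intro t
      rw [hF]
      simp only [add_sub_cancel_right]
      have hzj : z ^ j = Complex.exp (-Complex.I * ((j : ℝ) * τ : ℝ) * ξ) := by
        rw [hz, ← Complex.exp_nat_mul]
        congr 1
        push_cast
        ring
      have hsplit : (-Complex.I * ((t + (j : ℝ) * τ : ℝ) : ℂ) * (ξ : ℂ))
          = (-Complex.I * (((j : ℝ) * τ : ℝ) : ℂ) * (ξ : ℂ)) + (-Complex.I * (t : ℂ) * (ξ : ℂ)) := by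
        push_cast
        ring
      rw [hzj, hsplit, Complex.exp_add]
      ring
    simp_rw [this]
    rw [MeasureTheory.integral_const_mul]
  -- swap integral and sum
  have hswap := MeasureTheory.integral_tsum_of_summable_integral_norm hFint hFsum
  -- rearrange the left-hand side
  have hlhs : ∀ t : ℝ, ((τ ^ (-α) : ℝ) : ℂ) * (∑' j : ℕ, b j * f (t - j * τ)) *
      Complex.exp (-Complex.I * t * ξ)
      = ((τ ^ (-α) : ℝ) : ℂ) * ∑' j : ℕ, F j t := by
    intro t
    rw [mul_assoc, ← tsum_mul_right]
  calc ∫ t : ℝ, ((τ ^ (-α) : ℝ) : ℂ) * (∑' j : ℕ, b j * f (t - j * τ)) *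
        Complex.exp (-Complex.I * t * ξ)
      = ∫ t : ℝ, ((τ ^ (-α) : ℝ) : ℂ) * ∑' j : ℕ, F j t := by
        exact MeasureTheory.integral_congr_ae (Filter.Eventually.of_forall hlhs)
    _ = ((τ ^ (-α) : ℝ) : ℂ) * ∫ t : ℝ, ∑' j : ℕ, F j t := MeasureTheory.integral_const_mul _ _
    _ = ((τ ^ (-α) : ℝ) : ℂ) * ∑' j : ℕ, ∫ t : ℝ, F j t := by rw [← hswap]
    _ = ((τ ^ (-α) : ℝ) : ℂ) * ((∑' j : ℕ, b j * z ^ j) *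
          ∫ t : ℝ, f t * Complex.exp (-Complex.I * t * ξ)) := by
        congr 1
        simp_rw [hFval]
        rw [tsum_mul_right]
    _ = ((τ ^ (-α) : ℝ) : ℂ) * (1 - z) ^ (α : ℂ) *
          ∫ t : ℝ, f t * Complex.exp (-Complex.I * t * ξ) := by
        rw [(boundary_hasSum α hα0 b hb hsummable hznorm).tsum_eq]
        ring
end

section
/- Let α ∈ (0,1). There exist constants c > 0 and ε ∈ (0,1) such that for all complex z with 0 < |z| ≤ ε and |arg z| ≤ π/2 + ε: |(1 - e^{-z})^α - z^α(1 - α/2 + (α/2)e^{-z})| ≤ c|z|^{2+α}, where z^α and (1-e^{-z})^α are principal branch powers. -/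
open Real

set_option maxHeartbeats 1000000

/-- For `α ∈ (0,1)` there are `c > 0` and `ε ∈ (0,1)` such that for all complex `z`
with `0 < |z| ≤ ε` and `|arg z| ≤ π/2 + ε`:
`|(1 - e^{-z})^α - z^α (1 - α/2 + (α/2)e^{-z})| ≤ c|z|^{2+α}` (principal branches). -/
theorem stmt7 (α : ℝ) (hα : α ∈ Set.Ioo (0:ℝ) 1) :
    ∃ c > (0:ℝ), ∃ ε ∈ Set.Ioo (0:ℝ) 1,
      ∀ z : ℂ, 0 < ‖z‖ → ‖z‖ ≤ ε → |Complex.arg z| ≤ π/2 + ε →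
        ‖(1 - Complex.exp (-z)) ^ (α : ℂ)
            - z ^ (α : ℂ) * (1 - (α:ℂ)/2 + ((α:ℂ)/2) * Complex.exp (-z))‖
          ≤ c * ‖z‖ ^ (2 + α) := by
  obtain ⟨hα0, hα1⟩ := hα
  refine ⟨5, by norm_num, 1/10, by norm_num, ?_⟩
  intro z hz0 hzε hzarg
  set t : ℝ := ‖z‖ with ht
  have hz : z ≠ 0 := by simpa using norm_pos_iff.mp hz0
  have ht1 : t ≤ 1/10 := hzε
  have ht1' : t ≤ 1 := by linarith
  have htabs : ‖z‖ ≤ 1 := ht1'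
  set u : ℂ := (1 - Complex.exp (-z)) / z with hu
  have hzu : z * u = 1 - Complex.exp (-z) := by
    rw [hu]; field_simp
  -- ‖u - 1‖ ≤ ‖z‖
  have hu1eq : u - 1 = -(Complex.exp (-z) - 1 - (-z)) / z := by
    rw [hu]; field_simp; ring
  have habsneg : ‖-z‖ ≤ 1 := by simpa using htabs
  have hu1 : ‖u - 1‖ ≤ t := by
    rw [hu1eq]
    rw [norm_div, norm_neg]
    have h1 := Complex.norm_exp_sub_one_sub_id_le habsneg
    have h2 : ‖Complex.exp (-z) - 1 - -z‖ ≤ ‖z‖^2 := by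
      simpa using h1
    rw [div_le_iff₀ hz0]
    calc ‖Complex.exp (-z) - 1 - -z‖ ≤ ‖z‖^2 := h2
      _ = t * ‖z‖ := by rw [sq]
  have hu1t : ‖u - 1‖ ≤ 1/10 := hu1.trans ht1
  -- ‖u - 1 + z/2‖ ≤ ‖z‖^2
  have hexp3 := Complex.exp_bound habsneg (n := 3) (by norm_num)
  have hsum : (∑ i ∈ Finset.range 3, (-z) ^ i / (Nat.factorial i)) = 1 + (-z) + z^2/2 := by
    simp [Finset.sum_range_succ, Nat.factorial]
  have hexp3' : ‖Complex.exp (-z) - (1 + (-z) + z^2/2)‖ ≤ ‖z‖^3 * (2/9) := by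
    rw [← hsum]
    refine hexp3.trans (le_of_eq ?_)
    simp only [map_neg_eq_map, Nat.succ_eq_add_one, Nat.factorial]
    norm_num
  have hu2eq : u - 1 + z/2 = -(Complex.exp (-z) - (1 + (-z) + z^2/2)) / z := by
    rw [hu]; field_simp; ring
  have hu2 : ‖u - 1 + z/2‖ ≤ t^2 := by
    rw [hu2eq, norm_div, norm_neg, div_le_iff₀ hz0]
    calc ‖Complex.exp (-z) - (1 + (-z) + z^2/2)‖ ≤ ‖z‖^3 * (2/9) := hexp3'
      _ ≤ t^2 * ‖z‖ := by
          have h3 : (0:ℝ) ≤ ‖z‖^3 := pow_nonneg (norm_nonneg z) 3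
          nlinarith
  -- real/imag parts of u
  have hre : (9:ℝ)/10 ≤ u.re := by
    have h1 : |(u - 1).re| ≤ ‖u - 1‖ := Complex.abs_re_le_norm _
    have h2 : (u - 1).re = u.re - 1 := by simp
    rw [h2] at h1
    have := abs_le.mp h1
    linarith
  have hrepos : 0 < u.re := by linarith
  have hu0 : u ≠ 0 := by
    intro h
    rw [h] at hrepos
    simp at hrepos
  have him : |u.im| ≤ 1/10 := by
    have h1 : |(u - 1).im| ≤ ‖u - 1‖ := Complex.abs_im_le_norm _
    have h2 : (u - 1).im = u.im := by simp
    rw [h2] at h1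
    linarith
  have habsu : (9:ℝ)/10 ≤ ‖u‖ :=
    le_trans hre (Complex.re_le_norm u)
  -- arg u bound
  have hargu : |Complex.arg u| ≤ π/6 := by
    rw [Complex.arg_of_re_nonneg hrepos.le]
    have hratio : |u.im / ‖u‖| ≤ 1/2 := by
      rw [abs_div, abs_of_nonneg (norm_nonneg u)]
      rw [div_le_iff₀ (by linarith : (0:ℝ) < ‖u‖)]
      calc |u.im| ≤ 1/10 := him
        _ ≤ 1/2 * (9/10) := by norm_num
        _ ≤ 1/2 * ‖u‖ := by nlinarith
    obtain ⟨hr1, hr2⟩ := abs_le.mp hratio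
    have key : Real.arcsin (1/2) = π/6 := by
      rw [show (1:ℝ)/2 = Real.sin (π/6) from (Real.sin_pi_div_six).symm]
      exact Real.arcsin_sin (by linarith [Real.pi_pos]) (by linarith [Real.pi_pos])
    rw [abs_le]
    constructor
    · have : Real.arcsin (-(1/2)) ≤ Real.arcsin (u.im / ‖u‖) :=
        Real.monotone_arcsin (by linarith)
      rw [Real.arcsin_neg, key] at this
      linarith
    · have : Real.arcsin (u.im / ‖u‖) ≤ Real.arcsin (1/2) :=
        Real.monotone_arcsin hr2
      rw [key] at this
      linarith
  -- arg sum in Ioc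
  have hpi : (3:ℝ) < π := Real.pi_gt_three
  have hargz := abs_le.mp hzarg
  have hargu' := abs_le.mp hargu
  have hargsum : Complex.arg z + Complex.arg u ∈ Set.Ioc (-π) π :=
    ⟨by linarith [hargz.1, hargu'.1], by linarith [hargz.2, hargu'.2]⟩
  -- split the power
  have hlog : Complex.log (z * u) = Complex.log z + Complex.log u :=
    Complex.log_mul hz hu0 hargsum
  have hsplit : (1 - Complex.exp (-z)) ^ (α:ℂ) = z ^ (α:ℂ) * u ^ (α:ℂ) := by
    rw [← hzu, Complex.cpow_def_of_ne_zero (mul_ne_zero hz hu0),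
      Complex.cpow_def_of_ne_zero hz, Complex.cpow_def_of_ne_zero hu0,
      hlog, add_mul, Complex.exp_add]
  -- log u estimates
  set L : ℂ := Complex.log u with hL
  have hLsub : ‖L - (u - 1)‖ ≤ t^2 := by
    have h1 : Complex.log u = Complex.log (1 + (u - 1)) := by congr 1; ring
    have h2 := Complex.norm_log_one_add_sub_self_le (z := u - 1)
      (lt_of_le_of_lt hu1t (by norm_num))
    rw [hL, h1]
    refine h2.trans ?_
    set s : ℝ := ‖u - 1‖ with hs
    have hs0 : 0 ≤ s := norm_nonneg _
    have hst : s ≤ t := hu1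
    have hs10 : s ≤ 1/10 := hu1t
    have h3 : (1 - s)⁻¹ ≤ 2 := by
      rw [inv_le_comm₀ (by linarith) (by norm_num)]
      linarith
    have h4 : s^2 ≤ t^2 := by nlinarith
    nlinarith [sq_nonneg s]
  have hLnorm : ‖L‖ ≤ 3/2 * t := by
    have h1 : Complex.log u = Complex.log (1 + (u - 1)) := by congr 1; ring
    have h2 := Complex.norm_log_one_add_half_le_self (z := u - 1)
      (le_trans hu1t (by norm_num))
    rw [hL, h1]
    calc ‖Complex.log (1 + (u-1))‖ ≤ 3/2 * ‖u-1‖ := h2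
      _ ≤ 3/2 * t := by linarith
  have hαnorm : ‖(α:ℂ)‖ = α := by
    rw [Complex.norm_real, Real.norm_eq_abs, abs_of_pos hα0]
  have hLα : ‖L * (α:ℂ)‖ ≤ 3/2 * t := by
    rw [norm_mul, hαnorm]
    calc ‖L‖ * α ≤ (3/2*t) * 1 := by
          apply mul_le_mul hLnorm hα1.le hα0.le (by positivity)
      _ = 3/2 * t := by ring
  have hLα1 : ‖L * (α:ℂ)‖ ≤ 1 := hLα.trans (by linarith)
  -- the expansion of u^α
  set A : ℂ := Complex.exp (L * (α:ℂ)) - 1 - L * (α:ℂ) with hA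
  have hAbound : ‖A‖ ≤ 9/4 * t^2 := by
    have h1 := Complex.norm_exp_sub_one_sub_id_le (x := L * (α:ℂ)) hLα1
    calc ‖A‖ ≤ ‖L * (α:ℂ)‖^2 := h1
      _ ≤ (3/2*t)^2 := by nlinarith [norm_nonneg (L * (α:ℂ))]
      _ = 9/4 * t^2 := by ring
  set P : ℂ := 1 - (α:ℂ)/2 + ((α:ℂ)/2) * Complex.exp (-z) with hP
  have hPeq : P = 1 - ((α:ℂ)/2) * (z * u) := by
    rw [hP, hzu]; ring
  have hkey : u ^ (α:ℂ) - P
      = A + (α:ℂ) * (L - (u-1)) + (α:ℂ) * (u - 1 + z/2) + ((α:ℂ)/2) * z * (u-1) := by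
    rw [Complex.cpow_def_of_ne_zero hu0, ← hL, hPeq, hA]
    ring
  have hmain : ‖u ^ (α:ℂ) - P‖ ≤ 5 * t^2 := by
    rw [hkey]
    have h1 : ‖(α:ℂ) * (L - (u-1))‖ ≤ t^2 := by
      rw [norm_mul, hαnorm]
      calc α * ‖L - (u-1)‖ ≤ 1 * t^2 := by
            apply mul_le_mul hα1.le hLsub (norm_nonneg _) zero_le_one
        _ = t^2 := one_mul _
    have h2 : ‖(α:ℂ) * (u - 1 + z/2)‖ ≤ t^2 := by
      rw [norm_mul, hαnorm]
      calc α * ‖u - 1 + z/2‖ ≤ 1 * t^2 := by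
            apply mul_le_mul hα1.le hu2 (norm_nonneg _) zero_le_one
        _ = t^2 := one_mul _
    have h3 : ‖((α:ℂ)/2) * z * (u-1)‖ ≤ 1/2 * t^2 := by
      rw [norm_mul, norm_mul, norm_div, hαnorm]
      have : ‖(2:ℂ)‖ = 2 := by norm_num
      rw [this]
      calc α/2 * ‖z‖ * ‖u-1‖ ≤ 1/2 * t * t := by
            apply mul_le_mul _ hu1 (norm_nonneg _) (by positivity)
            apply mul_le_mul _ le_rfl (norm_nonneg z) (by norm_num)
            linarith
        _ = 1/2 * t^2 := by ring
    calc ‖A + (α:ℂ) * (L - (u-1)) + (α:ℂ) * (u - 1 + z/2) + ((α:ℂ)/2) * z * (u-1)‖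
        ≤ ‖A + (α:ℂ) * (L - (u-1)) + (α:ℂ) * (u - 1 + z/2)‖ + ‖((α:ℂ)/2) * z * (u-1)‖ :=
          norm_add_le _ _
      _ ≤ ‖A + (α:ℂ) * (L - (u-1))‖ + ‖(α:ℂ) * (u - 1 + z/2)‖ + ‖((α:ℂ)/2) * z * (u-1)‖ := by
          gcongr; exact norm_add_le _ _
      _ ≤ ‖A‖ + ‖(α:ℂ) * (L - (u-1))‖ + ‖(α:ℂ) * (u - 1 + z/2)‖ + ‖((α:ℂ)/2) * z * (u-1)‖ := by
          have := norm_add_le A ((α:ℂ) * (L - (u-1)))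
          linarith
      _ ≤ 9/4 * t^2 + t^2 + t^2 + 1/2 * t^2 := by
          gcongr
      _ ≤ 5 * t^2 := by nlinarith [sq_nonneg t]
  -- norm of z^α
  have hzα : ‖z ^ (α:ℂ)‖ = t ^ α := by
    rw [Complex.norm_cpow_of_ne_zero hz]
    simp only [Complex.ofReal_re, Complex.ofReal_im, mul_zero, Real.exp_zero, div_one]
    rw [ht]
  -- put everything together
  have hfinal : (1 - Complex.exp (-z)) ^ (α:ℂ)
      - z ^ (α:ℂ) * (1 - (α:ℂ)/2 + ((α:ℂ)/2) * Complex.exp (-z))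
      = z ^ (α:ℂ) * (u ^ (α:ℂ) - P) := by
    rw [hsplit, hP]; ring
  rw [hfinal, norm_mul, hzα]
  have hrpow : t ^ (2 + α) = t^2 * t^α := by
    rw [Real.rpow_add hz0, ← Real.rpow_natCast t 2]
    · push_cast; ring_nf
  rw [hrpow]
  calc t ^ α * ‖u ^ (α:ℂ) - P‖ ≤ t ^ α * (5 * t^2) := by
        apply mul_le_mul_of_nonneg_left hmain (Real.rpow_nonneg (norm_nonneg z) α)
    _ = 5 * (t^2 * t^α) := by ring
end

section
/- Let α ∈ (0,1), τ > 0, and define β_τ(ξ) = (1-ξ)/(τ(1 - α/2 + (α/2)ξ)^{1/α}). Then for z with Re z ≥ 0, z ≠ 0, and |z|τ ≤ π, the value β_τ(e^{-zτ})^α lies in the closed sector Σ_{απ/2} = {w ≠ 0 : |arg w| ≤ απ/2}. -/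
open Real

set_option maxHeartbeats 1000000

lemma lemA (β : ℝ) (hβ0 : 0 < β) (hβ : β < 1/2) {t : ℝ} (ht0 : 0 ≤ t) (ht : t ≤ π) :
    β * Real.sin t * Real.cos (β*t) ≤ Real.sin (β*t) * (1 - β + β * Real.cos t) := by
  set f : ℝ → ℝ := fun s => Real.sin (β*s) * (1 - β + β * Real.cos s) - β * Real.sin s * Real.cos (β*s) with hf
  have hder : ∀ s : ℝ, HasDerivAt f
      (β * (1-β) * ((1 - Real.cos s) * Real.cos (β*s) - Real.sin s * Real.sin (β*s))) s := by
    intro s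
    have hlin : HasDerivAt (fun y : ℝ => β * y) β s := by
      simpa using (hasDerivAt_id s).const_mul β
    have h1 : HasDerivAt (fun s : ℝ => Real.sin (β*s)) (Real.cos (β*s) * β) s :=
      (Real.hasDerivAt_sin (β*s)).comp s hlin
    have h2 : HasDerivAt (fun s : ℝ => Real.cos (β*s)) (-Real.sin (β*s) * β) s :=
      (Real.hasDerivAt_cos (β*s)).comp s hlin
    have h3 : HasDerivAt (fun s : ℝ => 1 - β + β * Real.cos s) (β * (-Real.sin s)) s :=
      ((Real.hasDerivAt_cos s).const_mul β).const_add (1-β)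
    have h4 : HasDerivAt (fun s : ℝ => β * Real.sin s) (β * Real.cos s) s :=
      (Real.hasDerivAt_sin s).const_mul β
    have := (h1.mul h3).sub (h4.mul h2)
    refine this.congr_deriv ?_
    ring
  have hkey : ∀ s ∈ Set.Icc (0:ℝ) π,
      0 ≤ (1 - Real.cos s) * Real.cos (β*s) - Real.sin s * Real.sin (β*s) := by
    intro s hs
    have hs0 := hs.1; have hsπ := hs.2
    have e1 : Real.sin s = 2 * Real.sin (s/2) * Real.cos (s/2) := by
      rw [show s = 2*(s/2) by ring, Real.sin_two_mul]; ring_nf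
    have e2 : Real.cos s = 1 - 2 * Real.sin (s/2)^2 := by
      have h : Real.cos s = 2*Real.cos (s/2)^2 - 1 := by
        rw [← Real.cos_two_mul]; ring_nf
      have h2 := Real.sin_sq_add_cos_sq (s/2)
      linarith
    have e3 : Real.sin (s/2 - β*s) = Real.sin (s/2) * Real.cos (β*s) - Real.cos (s/2) * Real.sin (β*s) :=
      Real.sin_sub _ _
    have eq : (1 - Real.cos s) * Real.cos (β*s) - Real.sin s * Real.sin (β*s)
        = 2 * Real.sin (s/2) * Real.sin (s/2 - β*s) := by
      rw [e3]; linear_combination (-Real.cos (β*s))*e2 + (-Real.sin (β*s))*e1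
    rw [eq]
    have hsin1 : 0 ≤ Real.sin (s/2) := Real.sin_nonneg_of_nonneg_of_le_pi (by linarith) (by linarith [Real.pi_pos])
    have hsin2 : 0 ≤ Real.sin (s/2 - β*s) := by
      apply Real.sin_nonneg_of_nonneg_of_le_pi
      · nlinarith
      · nlinarith [Real.pi_pos]
    positivity
  have hmono : MonotoneOn f (Set.Icc 0 π) := by
    apply monotoneOn_of_deriv_nonneg (convex_Icc 0 π)
    · exact (Differentiable.continuous (fun s => (hder s).differentiableAt)).continuousOn
    · intro x hx
      exact ((hder x).differentiableAt).differentiableWithinAt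
    · intro x hx
      rw [(hder x).deriv]
      rw [interior_Icc] at hx
      have := hkey x ⟨le_of_lt hx.1, le_of_lt hx.2⟩
      exact mul_nonneg (mul_nonneg hβ0.le (by linarith)) this
  have h0 : f 0 = 0 := by simp [hf]
  have := hmono (Set.mem_Icc.mpr ⟨le_refl 0, Real.pi_pos.le⟩) (Set.mem_Icc.mpr ⟨ht0, ht⟩) ht0
  rw [h0] at this
  simp only [hf] at this
  linarith

lemma lemChalf (α : ℝ) (hα0 : 0 < α) (hα1 : α < 1) (u : ℂ) (hu : u ≠ 0)
    (hle : ‖1-u‖ ≤ 1) (him : 0 ≤ u.im) :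
    0 ≤ α * u.arg - (1 - ((α:ℂ)/2)*u).arg ∧
      α * u.arg - (1 - ((α:ℂ)/2)*u).arg ≤ α * π / 2 := by
  have hπ := Real.pi_pos
  set D : ℂ := 1 - ((α:ℂ)/2)*u with hD
  -- basic coordinates
  have hDre : D.re = 1 - (α/2) * u.re := by simp [hD]
  have hDim : D.im = -((α/2) * u.im) := by simp [hD]
  -- from |1-u| ≤ 1
  have hsq : (1 - u.re)^2 + u.im^2 ≤ 1 := by
    have h := Complex.sq_norm (1-u)
    have h2 : ‖1-u‖^2 ≤ 1 := by nlinarith [norm_nonneg (1-u)]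
    rw [h, Complex.normSq_apply] at h2
    simp at h2
    nlinarith [h2]
  have hnsq : 0 < u.re^2 + u.im^2 := by
    have := Complex.normSq_pos.mpr hu
    rw [Complex.normSq_apply] at this
    nlinarith
  have hure : 0 < u.re := by nlinarith
  have hure2 : u.re ≤ 2 := by nlinarith
  -- θ = arg u ∈ [0, π/2)
  set θ := u.arg with hθ
  have hθ0 : 0 ≤ θ := Complex.arg_nonneg_iff.mpr him
  have hθlt : θ < π/2 := by
    have := Complex.abs_arg_lt_pi_div_two_iff.mpr (Or.inl hure)
    calc θ ≤ |θ| := le_abs_self _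
    _ < π/2 := this
  -- D basic facts
  have hDrepos : 0 < D.re := by rw [hDre]; nlinarith
  have hDne : D ≠ 0 := fun h => by rw [h] at hDrepos; simp at hDrepos
  have hargD_lt : |D.arg| < π/2 := Complex.abs_arg_lt_pi_div_two_iff.mpr (Or.inl hDrepos)
  have hargD_nonpos : D.arg ≤ 0 := by
    rcases lt_or_eq_of_le him with h | h
    · have : D.im < 0 := by rw [hDim]; nlinarith
      exact (Complex.arg_neg_iff.mpr this).le
    · have hDim0 : D.im = 0 := by rw [hDim, ← h]; ring
      have : D.arg = 0 := Complex.arg_eq_zero_iff.mpr ⟨hDrepos.le, hDim0⟩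
      simp [this]
  constructor
  · nlinarith [mul_nonneg hα0.le hθ0]
  -- upper bound: -arg D ≤ α * (π/2 - θ)
  have hr : ‖u‖ = Real.sqrt (u.re^2 + u.im^2) := by
    rw [Complex.norm_def, Complex.normSq_apply]; ring_nf
  set r := ‖u‖ with hrdef
  have hrpos : 0 < r := norm_pos_iff.mpr hu
  have hcos : Real.cos θ = u.re / r := Complex.cos_arg hu
  have hsin : Real.sin θ = u.im / r := Complex.sin_arg u
  have hre_eq : u.re = r * Real.cos θ := by rw [hcos]; field_simp
  have him_eq : u.im = r * Real.sin θ := by rw [hsin]; field_simp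
  have hrsq : r^2 = u.re^2 + u.im^2 := by
    rw [hrdef, Complex.sq_norm, Complex.normSq_apply]; ring
  have hrle : r ≤ 2 * Real.cos θ := by
    have h2re : r^2 ≤ 2 * u.re := by nlinarith
    rw [hre_eq] at h2re
    nlinarith
  have hcosθpos : 0 < Real.cos θ := Real.cos_pos_of_mem_Ioo ⟨by linarith, hθlt⟩
  have hsinθ : 0 ≤ Real.sin θ := Real.sin_nonneg_of_nonneg_of_le_pi hθ0 (by linarith)
  obtain ⟨ψ, hψ⟩ : ∃ ψ : ℝ, ψ = π/2 - θ := ⟨_, rfl⟩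
  have hψ0 : 0 < ψ := by rw [hψ]; linarith
  have hψle : ψ ≤ π/2 := by rw [hψ]; linarith
  have hαψ : α * ψ < π/2 := by
    have := mul_lt_mul_of_pos_right hα1 hψ0
    rw [one_mul] at this; linarith
  have hαψ0 : 0 ≤ α * ψ := by positivity
  have hcosαψ : 0 < Real.cos (α*ψ) := by
    apply Real.cos_pos_of_mem_Ioo
    rw [Set.mem_Ioo]
    exact ⟨by linarith, hαψ⟩
  -- key: tan(-arg D) ≤ tan (α ψ)
  have hdenom1 : 0 < 1 - (α/2) * u.re := by rw [← hDre]; exact hDrepos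
  have hdenom2 : 0 < 1 - α * Real.cos θ ^ 2 := by nlinarith [Real.cos_sq_le_one θ]
  have step1 : (α/2) * u.im / (1 - (α/2)*u.re) ≤
      (α * (Real.sin θ * Real.cos θ)) / (1 - α * Real.cos θ^2) := by
    apply div_le_div₀
    · positivity
    · rw [him_eq]
      nlinarith [mul_nonneg (mul_nonneg hα0.le hsinθ) (by linarith : (0:ℝ) ≤ 2*Real.cos θ - r)]
    · exact hdenom2
    · rw [hre_eq]
      nlinarith [mul_nonneg (mul_nonneg hα0.le hcosθpos.le) (by linarith : (0:ℝ) ≤ 2*Real.cos θ - r)]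
  have step2 : (α * (Real.sin θ * Real.cos θ)) / (1 - α * Real.cos θ^2) ≤ Real.tan (α*ψ) := by
    have hA := lemA (α/2) (by linarith) (by linarith) (t := π - 2*θ) (by linarith) (by linarith)
    have e1 : Real.sin (π - 2*θ) = 2 * Real.sin θ * Real.cos θ := by
      rw [Real.sin_pi_sub, Real.sin_two_mul]
    have e2 : Real.cos (π - 2*θ) = -(1 - 2*Real.sin θ^2) := by
      rw [Real.cos_pi_sub, Real.cos_two_mul]
      nlinarith [Real.sin_sq_add_cos_sq θ]
    have e3 : (α/2) * (π - 2*θ) = α * ψ := by rw [hψ]; ring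
    rw [e1, e2, e3] at hA
    have heq : (1 - α/2 + α/2 * -(1-2*Real.sin θ^2)) = 1 - α*Real.cos θ^2 := by
      linear_combination α * Real.sin_sq_add_cos_sq θ
    rw [heq] at hA
    rw [Real.tan_eq_sin_div_cos, div_le_div_iff₀ hdenom2 hcosαψ]
    linarith
  have htan : Real.tan (-D.arg) = (α/2) * u.im / (1 - (α/2)*u.re) := by
    rw [Real.tan_neg, Complex.tan_arg, hDim, hDre, neg_div, neg_neg]
  -- conclude by monotonicity of tan
  have hfinal : -D.arg ≤ α * ψ := by
    by_contra hcon
    push_neg at hcon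
    have h1 : Real.tan (α*ψ) < Real.tan (-D.arg) := by
      apply tan_lt_tan_of_lt_of_lt_pi_div_two (by linarith) _ hcon
      · cases abs_lt.mp hargD_lt; linarith
    rw [htan] at h1
    linarith [le_trans step1 step2]
  rw [hψ] at hfinal
  nlinarith

lemma lemC (α : ℝ) (hα0 : 0 < α) (hα1 : α < 1) (u : ℂ) (hu : u ≠ 0)
    (hle : ‖1-u‖ ≤ 1) :
    |α * u.arg - (1 - ((α:ℝ):ℂ)/2*u).arg| ≤ α * π / 2 := by
  have hπ := Real.pi_pos
  rcases le_or_gt 0 u.im with him | him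
  · obtain ⟨h1, h2⟩ := lemChalf α hα0 hα1 u hu hle him
    rw [abs_le]
    constructor
    · nlinarith
    · exact h2
  · set v := (starRingEnd ℂ) u with hv
    have hvne : v ≠ 0 := fun h => hu (by simpa [hv] using congrArg (starRingEnd ℂ) h)
    have hvim : 0 ≤ v.im := by simp [hv, Complex.conj_im]; linarith
    have hvle : ‖1 - v‖ ≤ 1 := by
      have : (1 : ℂ) - v = (starRingEnd ℂ) (1 - u) := by simp [hv]
      rw [this, Complex.norm_conj]; exact hle
    obtain ⟨h1, h2⟩ := lemChalf α hα0 hα1 v hvne hvle hvim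
    have hargu : u.arg ≠ π := by
      intro h
      have := Complex.arg_eq_pi_iff.mp h
      linarith [this.2]
    have hargv : v.arg = -u.arg := by rw [hv, Complex.arg_conj, if_neg hargu]
    have hDconj : (1 - ((α:ℝ):ℂ)/2*v) = (starRingEnd ℂ) (1 - ((α:ℝ):ℂ)/2*u) := by
      rw [hv, map_sub, map_one, map_mul, map_div₀, Complex.conj_ofReal, map_ofNat]
    have hDargne : (1 - ((α:ℝ):ℂ)/2*u).arg ≠ π := by
      intro h
      have h2 := (Complex.arg_eq_pi_iff.mp h).2
      simp only [Complex.sub_im, Complex.one_im, Complex.mul_im, Complex.div_re,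
        Complex.div_im] at h2
      simp at h2
      rcases h2 with h2 | h2
      · linarith
      · linarith
    have hargD : (1 - ((α:ℝ):ℂ)/2*v).arg = -(1 - ((α:ℝ):ℂ)/2*u).arg := by
      rw [hDconj, Complex.arg_conj, if_neg hDargne]
    rw [hargv, hargD] at h1 h2
    rw [abs_le]
    constructor <;> nlinarith

/-- Sector mapping property: for `α ∈ (0,1)`, `τ > 0`, and `z` in the closed right
half-plane with `z ≠ 0` and `|z|τ ≤ π`, the value
`β_τ(e^{-zτ})^α = (1-e^{-zτ})^α/(τ^α (1 - α/2 + (α/2)e^{-zτ}))`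
lies in the closed sector `Σ_{απ/2} = {w ≠ 0 : |arg w| ≤ απ/2}`. -/
theorem stmt14 (α : ℝ) (hα : α ∈ Set.Ioo (0:ℝ) 1) (τ : ℝ) (hτ : 0 < τ)
    (z : ℂ) (hz : z ≠ 0) (hre : 0 ≤ z.re) (hzτ : ‖z‖ * τ ≤ π) :
    let w : ℂ := (1 - Complex.exp (-z * τ)) ^ (α : ℂ) /
      (((τ ^ α : ℝ) : ℂ) * (1 - (α:ℂ)/2 + ((α:ℂ)/2) * Complex.exp (-z * τ)))
    w ≠ 0 ∧ |Complex.arg w| ≤ α * π / 2 := by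
  intro w
  obtain ⟨hα0, hα1⟩ := hα
  have hπ := Real.pi_pos
  set ξ : ℂ := Complex.exp (-z * τ) with hξ
  set u : ℂ := 1 - ξ with hu
  -- u ≠ 0
  have hune : u ≠ 0 := by
    rw [hu, sub_ne_zero]
    intro h
    obtain ⟨n, hn⟩ := Complex.exp_eq_one_iff.mp h.symm
    have hnorm : ‖-z * (τ:ℂ)‖ = ‖z‖ * τ := by
      rw [norm_mul, norm_neg, Complex.norm_real, Real.norm_of_nonneg hτ.le]
    have hnorm2 : ‖(n:ℂ) * (2 * (π:ℂ) * Complex.I)‖ = |(n:ℝ)| * (2*π) := by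
      rw [norm_mul, norm_mul, norm_mul, Complex.norm_I, Complex.norm_intCast,
        Complex.norm_real, Real.norm_of_nonneg hπ.le]
      push_cast
      simp [abs_of_nonneg]
    rcases eq_or_ne n 0 with h0 | h0
    · rw [h0] at hn
      simp at hn
      rcases hn with hn | hn
      · exact hz hn
      · exact hτ.ne' hn
    · have h1 : (1:ℝ) ≤ |(n:ℝ)| := by
        have h1 : (1:ℤ) ≤ |n| := Int.one_le_abs h0
        calc (1:ℝ) ≤ ((|n| : ℤ) : ℝ) := by exact_mod_cast h1
        _ = |(n:ℝ)| := by push_cast; simp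
      have h2 : ‖-z * (τ:ℂ)‖ = |(n:ℝ)| * (2*π) := by rw [hn, hnorm2]
      rw [hnorm] at h2
      nlinarith
  -- |1 - u| ≤ 1
  have habs1 : ‖1 - u‖ ≤ 1 := by
    rw [hu]
    simp only [sub_sub_cancel]
    rw [hξ, Complex.norm_exp]
    have : (-z * (τ:ℂ)).re = -(z.re * τ) := by simp
    rw [this]
    exact Real.exp_le_one_iff.mpr (by nlinarith)
  have hkey := lemC α hα0 hα1 u hune habs1
  -- D
  set D : ℂ := 1 - ((α:ℝ):ℂ)/2*u with hD
  have hDeq : 1 - (α:ℂ)/2 + ((α:ℂ)/2) * ξ = D := by rw [hD, hu]; ring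
  have huabs2 : ‖u‖ ≤ 2 := by
    have he : u = 1 - (1 - u) := by ring
    calc ‖u‖ = ‖(1:ℂ) - (1 - u)‖ := by rw [← he]
    _ ≤ ‖(1:ℂ)‖ + ‖(1:ℂ) - u‖ := norm_sub_le _ _
    _ ≤ 1 + 1 := by
        rw [norm_one]
        have : ‖(1:ℂ) - u‖ = ‖1 - u‖ := rfl
        rw [this]; linarith
    _ = 2 := by norm_num
  have hDrepos : 0 < D.re := by
    have h1 : D.re = 1 - α/2 * u.re := by simp [hD]
    have h2 : u.re ≤ 2 := le_trans (Complex.re_le_norm u) huabs2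
    rw [h1]
    rcases le_or_gt u.re 0 with h | h
    · nlinarith
    · nlinarith
  have hDne : D ≠ 0 := fun h => by rw [h] at hDrepos; simp at hDrepos
  -- polar forms
  have hτα : (0:ℝ) < τ ^ α := Real.rpow_pos_of_pos hτ α
  have huabspos : 0 < ‖u‖ := norm_pos_iff.mpr hune
  obtain ⟨c, hc⟩ : ∃ c : ℝ, c = ‖D‖ := ⟨_, rfl⟩
  obtain ⟨d, hd⟩ : ∃ d : ℝ, d = D.arg := ⟨_, rfl⟩
  have hcpos : 0 < c := by rw [hc]; exact norm_pos_iff.mpr hDne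
  set φ : ℝ := α * u.arg - d with hφ
  have hφle : |φ| ≤ α * π / 2 := by rw [hφ, hd]; exact hkey
  have h1 : u ^ (α:ℂ) = ((‖u‖ ^ α : ℝ) : ℂ) * Complex.exp (((α * u.arg : ℝ):ℂ) * Complex.I) := by
    rw [Complex.cpow_def_of_ne_zero hune]
    rw [show Complex.log u = ((Real.log (‖u‖) : ℝ):ℂ) + (u.arg:ℂ) * Complex.I from rfl]
    rw [Real.rpow_def_of_pos huabspos, Complex.ofReal_exp, ← Complex.exp_add]
    congr 1
    push_cast
    ring
  have h2 : D = ((c : ℝ):ℂ) * Complex.exp (((d : ℝ):ℂ) * Complex.I) := by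
    rw [hc, hd]; exact (Complex.norm_mul_exp_arg_mul_I D).symm
  set ρ : ℝ := ‖u‖ ^ α / (τ ^ α * c) with hρ
  have hρpos : 0 < ρ := by rw [hρ]; positivity
  have hE : Complex.exp (((φ:ℝ):ℂ) * Complex.I)
      = Complex.exp (((α * u.arg : ℝ):ℂ) * Complex.I) / Complex.exp (((d : ℝ):ℂ) * Complex.I) := by
    rw [← Complex.exp_sub]
    congr 1
    rw [hφ]
    push_cast
    ring
  have hw : w = ((ρ:ℝ):ℂ) * Complex.exp (((φ:ℝ):ℂ) * Complex.I) := by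
    show (1 - ξ) ^ (α:ℂ) / (((τ ^ α : ℝ) : ℂ) * (1 - (α:ℂ)/2 + ((α:ℂ)/2) * ξ)) = _
    rw [hDeq, ← hu, h1, h2, hE, hρ]
    push_cast
    rw [div_mul_eq_div_div, div_div, div_mul_eq_div_div]
    field_simp
  constructor
  · rw [hw]
    exact mul_ne_zero (by exact_mod_cast hρpos.ne') (Complex.exp_ne_zero _)
  · have hargw : Complex.arg w = φ := by
      rw [hw, Complex.arg_real_mul _ hρpos, Complex.exp_mul_I]
      apply Complex.arg_cos_add_sin_mul_I
      constructor
      · have h := (abs_le.mp hφle).1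
        nlinarith
      · have h := (abs_le.mp hφle).2
        nlinarith
    rw [hargw]
    exact hφle
end
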